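/- Let S = ⟨A ∣ u → v⟩ be a left cancellative one-rule SRS, and let x →_S z_1 →_S y and x →_S z_2 →_S y be two two-step reductions from x to y. Let x̄ → z̄_1 → ȳ_1 and x̄ → z̄_2 → ȳ_2 be their lifts to the decorated SRS S̄ (starting from the undecorated word x). Then ȳ_1 and ȳ_2 contain decorated letters, and the position of the leftmost decorated letter of ȳ_1 equals the position of the leftmost decorated letter of ȳ_2. -/

import Mathlib

/-- One-step reduction of the one-rule SRS `⟨A ∣ u → v⟩`: `w →_S w'`. -/
def Step {A : Type*} (u v w w' : List A) : Prop :=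
  ∃ p q : List A, w = p ++ u ++ q ∧ w' = p ++ v ++ q

/-- One-step reduction of `⟨A ∣ u → v⟩` carried out at position `i`. -/
def StepAt {A : Type*} (u v : List A) (i : ℕ) (w w' : List A) : Prop :=
  ∃ p q : List A, p.length = i ∧ w = p ++ u ++ q ∧ w' = p ++ v ++ q

/-- The diamond graph `M_k` is embeddable in the reduction graph `G_S` of
`S = ⟨A ∣ u → v⟩`: there are pairwise distinct words `x, y, z_1, …, z_k`
with `x →_S z_i` and `z_i →_S y` for every `i`. -/
def MkEmbeddable {A : Type*} (u v : List A) (k : ℕ) : Prop :=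
  ∃ (x y : List A) (z : Fin k → List A),
    Function.Injective z ∧ (∀ i, x ≠ z i) ∧ (∀ i, y ≠ z i) ∧ x ≠ y ∧
    ∀ i, Step u v x (z i) ∧ Step u v (z i) y

/-- Projection from the decorated alphabet `A ⊕ A` (`inl a` = plain letter `a`,
`inr a` = decorated letter `a•`) back to `A`. -/
def proj {A : Type*} : A ⊕ A → A := Sum.elim id id

/-- One-step reduction of the decorated SRS `S̄` carried out at position `i`:
some word `ū` projecting to `u` is replaced by the fully decorated `v•`. -/
def DecStepAt {A : Type*} (u v : List A) (i : ℕ) (w w' : List (A ⊕ A)) : Prop :=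
  ∃ p q ubar : List (A ⊕ A),
    p.length = i ∧ ubar.map proj = u ∧
    w = p ++ ubar ++ q ∧ w' = p ++ v.map Sum.inr ++ q

/-- The leftmost decorated letter of `w` is at position `i`. -/
def FirstDecorated {A : Type*} (w : List (A ⊕ A)) (i : ℕ) : Prop :=
  (∃ a : A, w[i]? = some (Sum.inr a)) ∧
  ∀ j < i, ∀ a : A, w[j]? ≠ some (Sum.inr a)

/-- The one-rule SRS `⟨A ∣ u → v⟩` is left cancellative:
`u, v` are nonempty and their first letters are distinct. -/
def LeftCancellative {A : Type*} (u v : List A) : Prop :=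
  u ≠ [] ∧ v ≠ [] ∧ u.head? ≠ v.head?

/-- `w` is bordered with `T`: `T` is both a prefix and a suffix of `w`. -/
def Bordered {A : Type*} (T w : List A) : Prop :=
  T <+: w ∧ T <:+ w

/-- `T` is self-overlap-free: `OVL(T) = ∅`, i.e. there is no nonempty `w`
with `T = x ++ w = w ++ y` for nonempty `x, y`. -/
def SelfOverlapFree {A : Type*} (T : List A) : Prop :=
  ∀ w x y : List A, w ≠ [] → x ≠ [] → y ≠ [] → T = x ++ w → T = w ++ y → False

/-- `glue T [R₁, …, R_k] = T R₁ T R₂ ⋯ T R_k T`, the word of `Bord_T` whose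
canonical decomposition is `R₁, …, R_k`; thus `φ_T (glue T Rs) = Rs`
(a word of length `Rs.length` over the alphabet `B` of `T`-free words). -/
def glue {A : Type*} (T : List A) : List (List A) → List A
  | [] => T
  | R :: Rs => T ++ R ++ glue T Rs

/-!
In a two-step reduction `x →_S z →_S y` at positions `p` and `q`, left cancellativity forces
`p ≠ q`, and `min p q` is the first position at which `x` and `y` differ: before it nothing
changed, and there the first letter of `u` was replaced by the first letter of `v`. The lift
to `S̄` writes its first decorated letter at `p`, then at `q`, and leaves everything left of
`min p q` undecorated, so the leftmost decorated letter of `ȳ` sits at `min p q`. This position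
depends only on `x` and `y`, hence is the same for both reductions.
-/

section Positions

variable {A : Type*}

theorem getElem?_append_append_of_lt (P s Q : List A) {j : ℕ} (hj : j < P.length) :
    (P ++ s ++ Q)[j]? = P[j]? := by
  rw [List.append_assoc, List.getElem?_append_left hj]

theorem getElem?_length_append_append (P Q : List A) {s : List A} (hs : s ≠ []) :
    (P ++ s ++ Q)[P.length]? = s.head? := by
  rw [List.append_assoc, List.getElem?_append_right le_rfl, Nat.sub_self,
    List.getElem?_append_left (List.length_pos_iff.mpr hs), List.head?_eq_getElem?]

variable {u v w w' : List A} {i j : ℕ}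

theorem StepAt.getElem?_eq_of_lt (h : StepAt u v i w w') (hj : j < i) : w[j]? = w'[j]? := by
  obtain ⟨P, Q, rfl, rfl, rfl⟩ := h
  rw [getElem?_append_append_of_lt _ _ _ hj, getElem?_append_append_of_lt _ _ _ hj]

theorem StepAt.getElem?_left (h : StepAt u v i w w') (hu : u ≠ []) : w[i]? = u.head? := by
  obtain ⟨P, Q, rfl, rfl, rfl⟩ := h
  exact getElem?_length_append_append P Q hu

theorem StepAt.getElem?_right (h : StepAt u v i w w') (hv : v ≠ []) : w'[i]? = v.head? := by
  obtain ⟨P, Q, rfl, rfl, rfl⟩ := h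
  exact getElem?_length_append_append P Q hv

variable {w w' : List (A ⊕ A)}

theorem DecStepAt.getElem?_eq_of_lt (h : DecStepAt u v i w w') (hj : j < i) :
    w[j]? = w'[j]? := by
  obtain ⟨P, Q, ubar, rfl, -, rfl, rfl⟩ := h
  rw [getElem?_append_append_of_lt _ _ _ hj, getElem?_append_append_of_lt _ _ _ hj]

theorem DecStepAt.getElem?_right (h : DecStepAt u v i w w') (hv : v ≠ []) :
    w'[i]? = some (Sum.inr (v.head hv)) := by
  obtain ⟨P, Q, ubar, rfl, -, rfl, rfl⟩ := h
  rw [getElem?_length_append_append P Q (by simpa using hv), List.head?_map,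
    List.head?_eq_some_head hv, Option.map_some]

end Positions

def FirstDiff {A : Type*} (x y : List A) (i : ℕ) : Prop :=
  (∀ j < i, x[j]? = y[j]?) ∧ x[i]? ≠ y[i]?

theorem FirstDiff.unique {A : Type*} {x y : List A} {i j : ℕ}
    (hi : FirstDiff x y i) (hj : FirstDiff x y j) : i = j := by
  rcases lt_trichotomy i j with h | h | h
  · exact absurd (hj.1 i h) hi.2
  · exact h
  · exact absurd (hi.1 j h) hj.2

namespace LeftCancellative

variable {A : Type*} {u v x z y : List A} {p q : ℕ}

theorem ne_of_stepAt (hlc : LeftCancellative u v)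
    (h₁ : StepAt u v p x z) (h₂ : StepAt u v q z y) : p ≠ q := by
  obtain ⟨hu, hv, hne⟩ := hlc
  rintro rfl
  exact hne ((h₂.getElem?_left hu).symm.trans (h₁.getElem?_right hv))

theorem firstDiff_min_of_stepAt (hlc : LeftCancellative u v)
    (h₁ : StepAt u v p x z) (h₂ : StepAt u v q z y) : FirstDiff x y (min p q) := by
  have hpq := hlc.ne_of_stepAt h₁ h₂
  obtain ⟨hu, hv, hne⟩ := hlc
  refine ⟨fun j hj ↦ ?_, ?_⟩
  · exact (h₁.getElem?_eq_of_lt (lt_of_lt_of_le hj (min_le_left _ _))).trans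
      (h₂.getElem?_eq_of_lt (lt_of_lt_of_le hj (min_le_right _ _)))
  suffices x[min p q]? = u.head? ∧ y[min p q]? = v.head? by rwa [this.1, this.2]
  rcases hpq.lt_or_gt with h | h
  · rw [min_eq_left h.le, ← h₂.getElem?_eq_of_lt h]
    exact ⟨h₁.getElem?_left hu, h₁.getElem?_right hv⟩
  · rw [min_eq_right h.le, h₁.getElem?_eq_of_lt h]
    exact ⟨h₂.getElem?_left hu, h₂.getElem?_right hv⟩

end LeftCancellative

theorem firstDecorated_min_of_decStepAt {A : Type*} {u v x : List A}
    {zbar ybar : List (A ⊕ A)} {p q : ℕ} (hv : v ≠ []) (hpq : p ≠ q)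
    (h₁ : DecStepAt u v p (x.map Sum.inl) zbar) (h₂ : DecStepAt u v q zbar ybar) :
    FirstDecorated ybar (min p q) := by
  refine ⟨⟨v.head hv, ?_⟩, fun j hj a ↦ ?_⟩
  · rcases hpq.lt_or_gt with h | h
    · rw [min_eq_left h.le, ← h₂.getElem?_eq_of_lt h, h₁.getElem?_right hv]
    · rw [min_eq_right h.le, h₂.getElem?_right hv]
  · rw [← h₂.getElem?_eq_of_lt (lt_of_lt_of_le hj (min_le_right _ _)),
      ← h₁.getElem?_eq_of_lt (lt_of_lt_of_le hj (min_le_left _ _)), List.getElem?_map]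
    cases x[j]? <;> simp

theorem same_first_decorated_position_general {A : Type*} (u v : List A)
    (hlc : LeftCancellative u v)
    (x z₁ z₂ y : List A) (zbar₁ zbar₂ ybar₁ ybar₂ : List (A ⊕ A))
    (p₁ q₁ p₂ q₂ : ℕ)
    (h₁ : StepAt u v p₁ x z₁) (h₂ : StepAt u v q₁ z₁ y)
    (h₃ : StepAt u v p₂ x z₂) (h₄ : StepAt u v q₂ z₂ y)
    (hb₁ : DecStepAt u v p₁ (x.map Sum.inl) zbar₁)
    (hb₂ : DecStepAt u v q₁ zbar₁ ybar₁)
    (hb₃ : DecStepAt u v p₂ (x.map Sum.inl) zbar₂)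
    (hb₄ : DecStepAt u v q₂ zbar₂ ybar₂) :
    ∃ i : ℕ, FirstDecorated ybar₁ i ∧ FirstDecorated ybar₂ i := by
  have hmin : min p₁ q₁ = min p₂ q₂ :=
    (hlc.firstDiff_min_of_stepAt h₁ h₂).unique (hlc.firstDiff_min_of_stepAt h₃ h₄)
  refine ⟨min p₁ q₁, firstDecorated_min_of_decStepAt hlc.2.1 (hlc.ne_of_stepAt h₁ h₂) hb₁ hb₂, ?_⟩
  rw [hmin]
  exact firstDecorated_min_of_decStepAt hlc.2.1 (hlc.ne_of_stepAt h₃ h₄) hb₃ hb₄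

/-- for a left cancellative `S` and two two-step reductions
`x → z₁ → y`, `x → z₂ → y` with lifts `x̄ → z̄₁ → ȳ₁`, `x̄ → z̄₂ → ȳ₂`
(starting from the undecorated `x`), both `ȳ₁` and `ȳ₂` contain decorated
letters and their leftmost decorated letters are at the same position. -/
theorem same_first_decorated_position {A : Type*} (u v : List A)
    (hlc : LeftCancellative u v)
    (x z₁ z₂ y : List A) (zbar₁ zbar₂ ybar₁ ybar₂ : List (A ⊕ A))
    (p₁ q₁ p₂ q₂ : ℕ)
    (h₁ : StepAt u v p₁ x z₁) (h₂ : StepAt u v q₁ z₁ y)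
    (h₃ : StepAt u v p₂ x z₂) (h₄ : StepAt u v q₂ z₂ y)
    (hb₁ : DecStepAt u v p₁ (x.map Sum.inl) zbar₁)
    (hb₂ : DecStepAt u v q₁ zbar₁ ybar₁)
    (hb₃ : DecStepAt u v p₂ (x.map Sum.inl) zbar₂)
    (hb₄ : DecStepAt u v q₂ zbar₂ ybar₂)
    (hpz₁ : zbar₁.map proj = z₁) (hpy₁ : ybar₁.map proj = y)
    (hpz₂ : zbar₂.map proj = z₂) (hpy₂ : ybar₂.map proj = y) :
    ∃ i : ℕ, FirstDecorated ybar₁ i ∧ FirstDecorated ybar₂ i :=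
  same_first_decorated_position_general u v hlc x z₁ z₂ y zbar₁ zbar₂ ybar₁ ybar₂ p₁ q₁ p₂ q₂ h₁ h₂
    h₃ h₄ hb₁ hb₂ hb₃ hb₄
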